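/- arXiv:0801.1899 — 3 statements merged into one kernel-verified Lean document; each statement's English description precedes it below -/
import Mathlib

section
/- Let Ω = Σ_{i=1}^n ξ_i ∧ J(ξ̄_i) be the standard (2,0)-form associated to a quaternionic Hermitian metric on a quaternionic vector space of real dimension 4n. Then for any (1,0)-vectors x_1, ..., x_n orthogonal with respect to the metric, (1/n!)·Ω^n(x_1, J(x̄_1), ..., x_n, J(x̄_n)) = Π_i q(x_i, x̄_i) ≥ 0; hence Ω^n is weakly positive. -/
/-!
STATEMENT 7.  Let `(V, I, J, K, q)` be a quaternionic Hermitian vector space of real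
dimension `4n`, encoded by its `(1,0)`-space `V` (complex dimension `2n`), the
antilinear map `J` and the positive definite quaternionic Hermitian metric, given on
`(1,0)`-vectors by the Hermitian form `h x y = q(x, ȳ)` (with quaternionic invariance
`h (Jx) (Jy) = h y x`).  The standard `(2,0)`-form `Ω = ω_J + √-1 ω_K = Σ ξ_i ∧ J(ξ̄_i)`
is characterized by `Ω(x, J(ȳ)) = q(x, ȳ)`, i.e. `Ω x y = -h x (J y)`.

Then for `(1,0)`-vectors `x₁, …, x_n` pairwise orthogonal with respect to the metric,
`(1/n!) Ω^n (x₁, J(x̄₁), …, x_n, J(x̄_n)) = Π_i q(x_i, x̄_i) ≥ 0`;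
hence `Ω^n` is weakly positive.
-/

noncomputable section

open scoped BigOperators

variable {V : Type*}

/-- Wedge product of `ℂ`-valued alternating forms (encoded as plain functions),
via antisymmetrization (shuffle convention). -/
def wedgeFun (V : Type*) (a b : ℕ)
    (f : (Fin a → V) → ℂ) (g : (Fin b → V) → ℂ) : (Fin (a + b) → V) → ℂ :=
  fun v =>
    (((a.factorial * b.factorial : ℕ) : ℂ))⁻¹ *
      ∑ σ : Equiv.Perm (Fin (a + b)),
        ((Equiv.Perm.sign σ : ℤ) : ℂ) *
          f (fun i => v (σ (Fin.castAdd b i))) * g (fun i => v (σ (Fin.natAdd a i)))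

/-- `n`-th wedge power of a 2-form. -/
def powFun (V : Type*) (f : (Fin 2 → V) → ℂ) : (n : ℕ) → (Fin (2 * n) → V) → ℂ
  | 0 => fun _ => 1
  | n + 1 => fun v =>
      wedgeFun V (2 * n) 2 (powFun V f n) f
        (fun i => v (Fin.cast (by ring) i))

/-- The tuple `(x₁, J(x̄₁), x₂, J(x̄₂), …, x_m, J(x̄_m))` (under the identification of
`T^{1,0}` with `V`, the vector `J(x̄)` corresponds to `J x`). -/
def tupleJ (J : V → V) (m : ℕ) (x : Fin m → V) : Fin (2 * m) → V :=
  fun i =>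
    if i.val % 2 = 0 then x ⟨i.val / 2, by have := i.isLt; omega⟩
    else J (x ⟨i.val / 2, by have := i.isLt; omega⟩)

/-
Write `Ω` as the bilinear form `B a b = -h a (J b)`. Then `2ⁿ Ωⁿ` is the alternation of
`v ↦ ∏ᵢ B v₂ᵢ v₂ᵢ₊₁`, an alternating form in `2n` vectors. On `(x₁, Jx₁, …, xₙ, Jxₙ)` with
`xᵢ ⊥ xⱼ, Jxⱼ` for `i ≠ j`, only the permutations that permute the pairs and possibly swap
inside each pair contribute; there are `n! 2ⁿ` of them, each contributing `∏ h(xᵢ, xᵢ)`.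
For arbitrary `yᵢ`, a Gram–Schmidt step against the orthogonal family `yⱼ, Jyⱼ` adds to `y_k`
a combination of the other entries of the tuple, and then `J y_k` also changes by such a
combination, which an alternating form does not see. So every value of `Ωⁿ` on such a tuple is
a value on an orthogonal one, a product of the nonnegative reals `h(y'ᵢ, y'ᵢ)`.
-/

open Equiv Finset Function
open scoped ComplexOrder

def pairIdx (n : ℕ) : Fin n × Fin 2 ≃ Fin (2 * n) where
  toFun p := ⟨2 * p.1 + p.2, by omega⟩
  invFun a := (⟨a / 2, by omega⟩, ⟨a % 2, by omega⟩)
  left_inv := by rintro ⟨i, j⟩; ext <;> simp <;> omega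
  right_inv a := by ext; simp; omega

@[simp]
lemma pairIdx_val (n : ℕ) (p : Fin n × Fin 2) : (pairIdx n p : ℕ) = 2 * p.1 + p.2 := rfl

lemma exists_prodShear_eq {ι : Type*} [Finite ι] (τ : Perm (ι × Fin 2))
    (hτ : ∀ i, (τ (i, 0)).1 = (τ (i, 1)).1) :
    ∃ (π : Perm ι) (s : ι → Perm (Fin 2)), prodShear π s = τ := by
  have hblock : ∀ i j, (τ (i, j)).1 = (τ (i, 0)).1 := fun i j => by
    rcases (show j = 0 ∨ j = 1 by omega) with rfl | rfl
    · rfl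
    · exact (hτ i).symm
  have hs : ∀ i, Injective fun j => (τ (i, j)).2 := fun i j j' hjj' => by
    simpa using τ.injective (Prod.ext ((hblock i j).trans (hblock i j').symm) hjj')
  have hπ : Injective fun i => (τ (i, 0)).1 := fun i i' hii' => by
    obtain ⟨j, hj⟩ := (Finite.injective_iff_surjective.mp (hs i)) (τ (i', 0)).2
    have := τ.injective (Prod.ext ((hblock i j).trans hii') hj : τ (i, j) = τ (i', 0))
    exact (Prod.ext_iff.mp this).1
  refine ⟨.ofBijective _ (Finite.injective_iff_bijective.mp hπ),
    fun i => .ofBijective _ (Finite.injective_iff_bijective.mp (hs i)), ?_⟩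
  ext ⟨i, j⟩ <;> simp [hblock]

lemma sign_prodShear {ι : Type*} [Fintype ι] [DecidableEq ι] (π : Perm ι)
    (s : ι → Perm (Fin 2)) : Perm.sign (prodShear π s) = ∏ i, Perm.sign (s i) := by
  have : prodShear π s = prodCongrLeft (fun _ => π) * prodCongrRight s := by ext <;> rfl
  rw [this, Perm.sign_mul, Perm.sign_prodCongrLeft, Perm.sign_prodCongrRight]
  simp

lemma prodShear_injective {ι : Type*} :
    Injective fun p : Perm ι × (ι → Perm (Fin 2)) =>
      (prodShear p.1 p.2 : Perm (ι × Fin 2)) := by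
  rintro ⟨π, s⟩ ⟨π', s'⟩ h
  have h' := fun i j => Prod.ext_iff.mp (DFunLike.congr_fun h (i, j))
  simp only [prodShear_apply] at h'
  exact Prod.ext (Equiv.ext fun i => (h' i 0).1)
    (funext fun i => Equiv.ext fun j => (h' i j).2)

lemma sign_mul_apply_perm_fin_two {R : Type*} [CommRing R] (F : Fin 2 → Fin 2 → R) (g : R)
    (h01 : F 0 1 = g) (h10 : F 1 0 = -g) (σ : Perm (Fin 2)) :
    (Perm.sign σ : R) * F (σ 0) (σ 1) = g := by
  obtain rfl | rfl : σ = 1 ∨ σ = swap 0 1 := by revert σ; decide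
  · simp [h01]
  · simp [h10]

lemma sum_perm_sign_mul_prod_of_block {R : Type*} [CommRing R] {ι : Type*} [Fintype ι]
    [DecidableEq ι] (F : ι × Fin 2 → ι × Fin 2 → R) (g : ι → R)
    (hF : ∀ p q, p.1 ≠ q.1 → F p q = 0) (h01 : ∀ i, F (i, 0) (i, 1) = g i)
    (h10 : ∀ i, F (i, 1) (i, 0) = -g i) :
    ∑ τ : Perm (ι × Fin 2), (Perm.sign τ : R) * ∏ i, F (τ (i, 0)) (τ (i, 1)) =
      (Fintype.card ι).factorial * 2 ^ Fintype.card ι * ∏ i, g i := by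
  set T : Perm (ι × Fin 2) → R := fun τ =>
    (Perm.sign τ : R) * ∏ i, F (τ (i, 0)) (τ (i, 1))
  have hT : ∀ π s, T (prodShear π s) = ∏ i, g i := by
    intro π s
    simp only [T, sign_prodShear, prodShear_apply, Units.coe_prod, Int.cast_prod,
      ← prod_mul_distrib]
    rw [← Equiv.prod_comp π g]
    refine prod_congr rfl fun i _ => ?_
    exact sign_mul_apply_perm_fin_two (fun j j' => F (π i, j) (π i, j')) _ (h01 _) (h10 _) _
  have hsupp : ∀ τ, T τ ≠ 0 → τ ∈ univ.image fun p : Perm ι × (ι → Perm (Fin 2)) =>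
      prodShear p.1 p.2 := by
    intro τ hτ
    have hblock : ∀ i, (τ (i, 0)).1 = (τ (i, 1)).1 := fun i => by
      by_contra hne
      exact hτ (mul_eq_zero_of_right _ (prod_eq_zero (mem_univ i) (hF _ _ hne)))
    obtain ⟨π, s, rfl⟩ := exists_prodShear_eq τ hblock
    exact mem_image_of_mem _ (mem_univ (π, s))
  calc ∑ τ, T τ
      = ∑ τ ∈ univ.image fun p : Perm ι × (ι → Perm (Fin 2)) => prodShear p.1 p.2, T τ :=
        (sum_subset (subset_univ _) fun τ _ hτ => not_imp_comm.mp (hsupp τ) hτ).symm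
    _ = ∑ _p : Perm ι × (ι → Perm (Fin 2)), ∏ i, g i := by
        rw [sum_image fun p _ q _ hpq => prodShear_injective hpq]
        exact sum_congr rfl fun p _ => hT p.1 p.2
    _ = _ := by simp [Fintype.card_perm, mul_comm]

section PairingForm

variable {R M : Type*} [CommRing R] [AddCommGroup M] [Module R M]

lemma exists_linearMap_prod_update (B : LinearMap.BilinForm R M) {ι : Type*} [Fintype ι]
    [DecidableEq ι] [DecidableEq (ι × Fin 2)] (v : ι × Fin 2 → M) (p : ι × Fin 2) :
    ∃ L : M →ₗ[R] R, ∀ z, ∏ i, B (update v p z (i, 0)) (update v p z (i, 1)) = L z := by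
  obtain ⟨i₀, j₀⟩ := p
  set C := ∏ i ∈ univ.erase i₀, B (v (i, 0)) (v (i, 1))
  have hsplit : ∀ z, ∏ i, B (update v (i₀, j₀) z (i, 0)) (update v (i₀, j₀) z (i, 1)) =
      B (update v (i₀, j₀) z (i₀, 0)) (update v (i₀, j₀) z (i₀, 1)) * C := fun z => by
    rw [← mul_prod_erase univ _ (mem_univ i₀)]
    congr 1
    refine prod_congr rfl fun i hi => ?_
    have hne : ∀ j, (i, j) ≠ (i₀, j₀) := fun j h => ne_of_mem_erase hi (Prod.ext_iff.mp h).1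
    rw [update_of_ne (hne 0), update_of_ne (hne 1)]
  rcases (show j₀ = 0 ∨ j₀ = 1 by omega) with rfl | rfl
  · exact ⟨C • B.flip (v (i₀, 1)), fun z => by rw [hsplit]; simp [mul_comm]⟩
  · exact ⟨C • B (v (i₀, 0)), fun z => by rw [hsplit]; simp [mul_comm]⟩

def pairProd (B : LinearMap.BilinForm R M) (ι : Type*) [Fintype ι] :
    MultilinearMap R (fun _ : ι × Fin 2 => M) R where
  toFun v := ∏ i, B (v (i, 0)) (v (i, 1))
  map_update_add' v p x y := by
    classical
    obtain ⟨L, hL⟩ := exists_linearMap_prod_update B v p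
    simp only [hL, map_add]
  map_update_smul' v p c x := by
    classical
    obtain ⟨L, hL⟩ := exists_linearMap_prod_update B v p
    simp only [hL, map_smul]

def pairingForm (B : LinearMap.BilinForm R M) (n : ℕ) : M [⋀^Fin (2 * n)]→ₗ[R] R :=
  MultilinearMap.alternatization ((pairProd B (Fin n)).domDomCongr (pairIdx n))

lemma pairingForm_apply (B : LinearMap.BilinForm R M) (n : ℕ) (v : Fin (2 * n) → M) :
    pairingForm B n v = ∑ σ : Perm (Fin (2 * n)),
      (Perm.sign σ : R) * ∏ i, B (v (σ (pairIdx n (i, 0)))) (v (σ (pairIdx n (i, 1)))) := by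
  simp [pairingForm, MultilinearMap.alternatization_apply, pairProd, Units.smul_def]

lemma pairingForm_eq_of_block (B : LinearMap.BilinForm R M) (n : ℕ) (v : Fin (2 * n) → M)
    (g : Fin n → R) (hB : ∀ p q, p.1 ≠ q.1 → B (v (pairIdx n p)) (v (pairIdx n q)) = 0)
    (h01 : ∀ i, B (v (pairIdx n (i, 0))) (v (pairIdx n (i, 1))) = g i)
    (h10 : ∀ i, B (v (pairIdx n (i, 1))) (v (pairIdx n (i, 0))) = -g i) :
    pairingForm B n v = n.factorial * 2 ^ n * ∏ i, g i := by
  rw [pairingForm_apply, ← Equiv.sum_comp (pairIdx n).permCongr]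
  simpa [Perm.sign_permCongr] using sum_perm_sign_mul_prod_of_block
    (fun p q => B (v (pairIdx n p)) (v (pairIdx n q))) g hB h01 h10

def permCastAdd {m : ℕ} (k : ℕ) (τ : Perm (Fin m)) : Perm (Fin (m + k)) :=
  finSumFinEquiv.permCongr (τ.sumCongr 1)

@[simp]
lemma permCastAdd_castAdd {m : ℕ} (k : ℕ) (τ : Perm (Fin m)) (i : Fin m) :
    permCastAdd k τ (Fin.castAdd k i) = Fin.castAdd k (τ i) := by
  simp [permCastAdd, ← finSumFinEquiv_apply_left]

@[simp]
lemma permCastAdd_natAdd {m : ℕ} (k : ℕ) (τ : Perm (Fin m)) (j : Fin k) :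
    permCastAdd k τ (Fin.natAdd m j) = Fin.natAdd m j := by
  simp [permCastAdd, ← finSumFinEquiv_apply_right]

@[simp]
lemma sign_permCastAdd {m : ℕ} (k : ℕ) (τ : Perm (Fin m)) :
    Perm.sign (permCastAdd k τ) = Perm.sign τ := by
  simp [permCastAdd, Perm.sign_permCongr, Perm.sign_sumCongr]

lemma pairingForm_succ_apply (B : LinearMap.BilinForm R M) (n : ℕ)
    (v : Fin (2 * (n + 1)) → M) :
    pairingForm B (n + 1) v = ∑ σ : Perm (Fin (2 * n + 2)), (Perm.sign σ : R) *
      (∏ i, B (v (Fin.cast (by ring) (σ (Fin.castAdd 2 (pairIdx n (i, 0))))))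
        (v (Fin.cast (by ring) (σ (Fin.castAdd 2 (pairIdx n (i, 1))))))) *
      B (v (Fin.cast (by ring) (σ (Fin.natAdd (2 * n) 0))))
        (v (Fin.cast (by ring) (σ (Fin.natAdd (2 * n) 1)))) := by
  rw [pairingForm_apply,
    ← Equiv.sum_comp (finCongr (by ring : 2 * n + 2 = 2 * (n + 1))).permCongr]
  refine sum_congr rfl fun σ _ => ?_
  rw [Perm.sign_permCongr, Fin.prod_univ_castSucc, mul_assoc]
  rfl

lemma sum_sign_mul_pairingForm_mul (B : LinearMap.BilinForm R M) (n : ℕ)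
    (v : Fin (2 * (n + 1)) → M) :
    ∑ σ : Perm (Fin (2 * n + 2)), (Perm.sign σ : R) *
      pairingForm B n (fun i => v (Fin.cast (by ring) (σ (Fin.castAdd 2 i)))) *
      B (v (Fin.cast (by ring) (σ (Fin.natAdd (2 * n) 0))))
        (v (Fin.cast (by ring) (σ (Fin.natAdd (2 * n) 1)))) =
      (2 * n).factorial * pairingForm B (n + 1) v := by
  set v' : Fin (2 * n + 2) → M := fun i => v (Fin.cast (by ring) i)
  set T : Perm (Fin (2 * n + 2)) → R := fun ρ => (Perm.sign ρ : R) *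
    (∏ i, B (v' (ρ (Fin.castAdd 2 (pairIdx n (i, 0)))))
      (v' (ρ (Fin.castAdd 2 (pairIdx n (i, 1)))))) *
    B (v' (ρ (Fin.natAdd (2 * n) 0))) (v' (ρ (Fin.natAdd (2 * n) 1)))
  have hterm : ∀ σ : Perm (Fin (2 * n + 2)), (Perm.sign σ : R) *
      pairingForm B n (fun i => v' (σ (Fin.castAdd 2 i))) *
      B (v' (σ (Fin.natAdd (2 * n) 0))) (v' (σ (Fin.natAdd (2 * n) 1))) =
      ∑ τ, T (σ * permCastAdd 2 τ) := fun σ => by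
    simp only [T, pairingForm_apply, Perm.mul_apply, permCastAdd_castAdd, permCastAdd_natAdd,
      Perm.sign_mul, sign_permCastAdd, mul_sum, sum_mul]
    refine sum_congr rfl fun τ _ => ?_
    push_cast
    ring
  calc _ = ∑ σ, ∑ τ, T (σ * permCastAdd 2 τ) := sum_congr rfl fun σ _ => hterm σ
    _ = ∑ _τ : Perm (Fin (2 * n)), ∑ σ, T σ := by
        rw [sum_comm]
        exact sum_congr rfl fun τ _ => Equiv.sum_comp (Equiv.mulRight (permCastAdd 2 τ)) T
    _ = _ := by simp [pairingForm_succ_apply, T, v', Fintype.card_perm]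

end PairingForm

lemma powFun_eq_inv_two_pow_mul_pairingForm [AddCommGroup V] [Module ℂ V]
    (B : LinearMap.BilinForm ℂ V) (Ω : (Fin 2 → V) → ℂ) (hΩ : ∀ v, Ω v = B (v 0) (v 1))
    (n : ℕ) (v : Fin (2 * n) → V) :
    powFun V Ω n v = ((2 : ℂ) ^ n)⁻¹ * pairingForm B n v := by
  induction n with
  | zero => rw [pairingForm_apply]; simp [powFun]
  | succ n ih =>
    have hwedge := sum_sign_mul_pairingForm_mul B n v
    simp only [powFun, wedgeFun, ih, hΩ]
    have hfac : ((2 * n).factorial : ℂ) ≠ 0 := Nat.cast_ne_zero.mpr (Nat.factorial_ne_zero _)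
    rw [← inv_mul_cancel_left₀ hfac (pairingForm B (n + 1) v), ← hwedge, mul_sum, mul_sum,
      mul_sum]
    refine sum_congr rfl fun σ _ => ?_
    push_cast [Nat.factorial_two]
    field_simp
    ring

lemma AlternatingMap.map_update_add_of_mem_span {R M N ι : Type*} [CommRing R]
    [AddCommGroup M] [Module R M] [AddCommGroup N] [Module R N] [DecidableEq ι]
    (f : M [⋀^ι]→ₗ[R] N)
    (v : ι → M) (a : ι) {u : M} (hu : u ∈ Submodule.span R (v '' {a}ᶜ)) :
    f (update v a (v a + u)) = f v := by
  have hker :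
      Submodule.span R (v '' {a}ᶜ) ≤ LinearMap.ker (f.toMultilinearMap.toLinearMap v a) :=
    Submodule.span_le.mpr <| by
      rintro _ ⟨b, hb, rfl⟩
      exact f.map_update_self v (Ne.symm hb)
  have hfu : f (update v a u) = 0 := hker hu
  rw [f.map_update_add, update_eq_self, hfu, add_zero]

@[simp]
lemma tupleJ_pairIdx_zero (J : V → V) (n : ℕ) (y : Fin n → V) (i : Fin n) :
    tupleJ J n y (pairIdx n (i, 0)) = y i := by
  simp [tupleJ]

@[simp]
lemma tupleJ_pairIdx_one (J : V → V) (n : ℕ) (y : Fin n → V) (i : Fin n) :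
    tupleJ J n y (pairIdx n (i, 1)) = J (y i) := by
  simp [tupleJ, show (2 * (i : ℕ) + 1) / 2 = i by omega]

lemma tupleJ_update (J : V → V) (n : ℕ) (y : Fin n → V) (k : Fin n) (z : V) :
    tupleJ J n (update y k z) =
      update (update (tupleJ J n y) (pairIdx n (k, 1)) (J z)) (pairIdx n (k, 0)) z := by
  funext a
  obtain ⟨⟨i, j⟩, rfl⟩ := (pairIdx n).surjective a
  rcases (show j = 0 ∨ j = 1 by omega) with rfl | rfl <;>
    rcases eq_or_ne i k with rfl | hik <;> simp [update_of_ne, *]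

lemma AlternatingMap.map_tupleJ_update_add [AddCommGroup V] [Module ℂ V] {N : Type*}
    [AddCommGroup N] [Module ℂ N] {n : ℕ} (f : V [⋀^Fin (2 * n)]→ₗ[ℂ] N) (J : V →ₗ⋆[ℂ] V)
    (hJJ : ∀ a, J (J a) = -a) (y : Fin n → V) (k : Fin n) {u : V}
    (hu : u ∈ Submodule.span ℂ (tupleJ J n y '' {a | ((pairIdx n).symm a).1 ≠ k})) :
    f (tupleJ J n (update y k (y k + u))) = f (tupleJ J n y) := by
  set v := tupleJ J n y
  set T := {a | ((pairIdx n).symm a).1 ≠ k}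
  have hT : ∀ j, T ⊆ {pairIdx n (k, j)}ᶜ := by
    rintro j a ha rfl
    simp [T] at ha
  have hJT : J '' (v '' T) ⊆ Submodule.span ℂ (v '' T) := by
    rintro _ ⟨_, ⟨a, ha, rfl⟩, rfl⟩
    obtain ⟨⟨t, j⟩, rfl⟩ := (pairIdx n).surjective a
    have hmem : ∀ j', v (pairIdx n (t, j')) ∈ v '' T := fun j' =>
      ⟨_, by simpa [T] using ha, rfl⟩
    rcases (show j = 0 ∨ j = 1 by omega) with rfl | rfl
    · simpa [v] using Submodule.subset_span (R := ℂ) (hmem 1)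
    · simpa [v, hJJ] using Submodule.neg_mem _ (Submodule.subset_span (R := ℂ) (hmem 0))
  have hJu : J u ∈ Submodule.span ℂ (v '' T) := by
    have := Submodule.mem_map_of_mem (f := J) hu
    rw [Submodule.map_span] at this
    exact Submodule.span_le.mpr hJT this
  set v₁ := update v (pairIdx n (k, 1)) (v (pairIdx n (k, 1)) + J u)
  have hv₁ : Set.EqOn v₁ v T := fun a ha => update_of_ne (hT 1 ha) _ _
  have hu₁ : u ∈ Submodule.span ℂ (v₁ '' {pairIdx n (k, 0)}ᶜ) :=
    Submodule.span_mono (hv₁.image_eq ▸ Set.image_mono (hT 0)) hu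
  calc f (tupleJ J n (update y k (y k + u)))
      = f (update v₁ (pairIdx n (k, 0)) (v₁ (pairIdx n (k, 0)) + u)) := by
        simp [tupleJ_update, v₁, v, update_of_ne]
    _ = f v₁ := f.map_update_add_of_mem_span v₁ _ hu₁
    _ = f v :=
        f.map_update_add_of_mem_span v _ (Submodule.span_mono (Set.image_mono (hT 1)) hJu)

lemma apply_sub_sum_div_smul_eq_zero {𝕜 E : Type*} [Field 𝕜] [AddCommGroup E] [Module 𝕜 E]
    {σ : 𝕜 →+* 𝕜} (H : E →ₗ[𝕜] E →ₛₗ[σ] 𝕜) {ι : Type*} (S : Finset ι) (e : ι → E) (z : E)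
    {j : ι} (hj : j ∈ S) (horth : ∀ t ∈ S, t ≠ j → H (e t) (e j) = 0)
    (hdeg : H (e j) (e j) = 0 → H z (e j) = 0) :
    H (z - ∑ t ∈ S, (H z (e t) / H (e t) (e t)) • e t) (e j) = 0 := by
  simp only [map_sub, map_sum, map_smul, LinearMap.sub_apply, LinearMap.coe_sum,
    LinearMap.coe_smul, Finset.sum_apply, Pi.smul_apply, smul_eq_mul]
  rw [sum_eq_single j (fun t ht htj => by rw [horth t ht htj, mul_zero]) (absurd hj)]
  by_cases h0 : H (e j) (e j) = 0
  · simp [h0, hdeg h0]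
  · rw [div_mul_cancel₀ _ h0, sub_self]

section QuaternionicHermitian

variable [AddCommGroup V] [Module ℂ V]

lemma exists_sesquilinear_eq {h : V → V → ℂ}
    (hherm : ∀ x y, starRingEnd ℂ (h x y) = h y x)
    (hlin : ∀ (c : ℂ) x x' y, h (c • x + x') y = c * h x y + h x' y) :
    ∃ H : V →ₗ[ℂ] V →ₗ⋆[ℂ] ℂ, (fun a b => H a b) = h := by
  have hadd : ∀ x x' y, h (x + x') y = h x y + h x' y := by simpa using hlin 1
  have hsmul : ∀ (c : ℂ) x y, h (c • x) y = c * h x y := fun c x y => by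
    have h0 : h 0 y = 0 := by simpa using hadd 0 0 y
    simpa [h0] using hlin c x 0 y
  refine ⟨LinearMap.mk₂'ₛₗ (RingHom.id ℂ) (starRingEnd ℂ) h hadd hsmul (fun x y y' => ?_)
    (fun c x y => ?_), rfl⟩
  · rw [← hherm, hadd, map_add, hherm, hherm]
  · rw [← hherm, hsmul, map_mul, hherm, smul_eq_mul]

def QOrthogonal (H : V →ₗ[ℂ] V →ₗ⋆[ℂ] ℂ) (J : V →ₗ⋆[ℂ] V) (a b : V) : Prop :=
  H a b = 0 ∧ H a (J b) = 0

def omegaForm (H : V →ₗ[ℂ] V →ₗ⋆[ℂ] ℂ) (J : V →ₗ⋆[ℂ] V) : LinearMap.BilinForm ℂ V :=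
  -H.compl₂ J

@[simp]
lemma omegaForm_apply (H : V →ₗ[ℂ] V →ₗ⋆[ℂ] ℂ) (J : V →ₗ⋆[ℂ] V) (a b : V) :
    omegaForm H J a b = -H a (J b) := rfl

variable {H : V →ₗ[ℂ] V →ₗ⋆[ℂ] ℂ} {J : V →ₗ⋆[ℂ] V}

lemma apply_J_comm (hJJ : ∀ a, J (J a) = -a) (hJinv : ∀ a b, H (J a) (J b) = H b a) (a b : V) :
    H b (J a) = -H a (J b) := by
  have := hJinv (J b) a
  rw [hJJ, map_neg, LinearMap.neg_apply] at this
  rw [← this, neg_neg]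

lemma apply_J_self (hJJ : ∀ a, J (J a) = -a) (hJinv : ∀ a b, H (J a) (J b) = H b a) (a : V) :
    H a (J a) = 0 :=
  self_eq_neg.mp (apply_J_comm hJJ hJinv a a)

lemma J_apply_self (hJJ : ∀ a, J (J a) = -a) (hJinv : ∀ a b, H (J a) (J b) = H b a) (a : V) :
    H (J a) a = 0 := by
  simpa [hJJ] using apply_J_self hJJ hJinv (J a)

lemma QOrthogonal.symm (hH : ∀ a b, starRingEnd ℂ (H a b) = H b a) (hJJ : ∀ a, J (J a) = -a)
    (hJinv : ∀ a b, H (J a) (J b) = H b a) {a b : V} (hab : QOrthogonal H J a b) :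
    QOrthogonal H J b a :=
  ⟨by rw [← hH, hab.1, map_zero], by rw [apply_J_comm hJJ hJinv, hab.2, neg_zero]⟩

lemma QOrthogonal.apply_eq_zero (hH : ∀ a b, starRingEnd ℂ (H a b) = H b a)
    (hJinv : ∀ a b, H (J a) (J b) = H b a) {a b : V} (hab : QOrthogonal H J a b)
    (hba : QOrthogonal H J b a) :
    H a b = 0 ∧ H a (J b) = 0 ∧ H (J a) b = 0 ∧ H (J a) (J b) = 0 :=
  ⟨hab.1, hab.2, by rw [← hH, hba.2, map_zero], by rw [hJinv, hba.1]⟩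

lemma pairingForm_omegaForm_tupleJ_of_pairwise (hH : ∀ a b, starRingEnd ℂ (H a b) = H b a)
    (hJJ : ∀ a, J (J a) = -a) (hJinv : ∀ a b, H (J a) (J b) = H b a) {n : ℕ} (x : Fin n → V)
    (hx : Pairwise (QOrthogonal H J on x)) :
    pairingForm (omegaForm H J) n (tupleJ J n x) = n.factorial * 2 ^ n * ∏ i, H (x i) (x i) := by
  refine pairingForm_eq_of_block _ _ _ _ ?_ (fun i => by simp [hJJ]) (fun i => by simp [hJinv])
  rintro ⟨s, j⟩ ⟨t, j'⟩ hst
  have h := (hx hst).apply_eq_zero hH hJinv (hx hst.symm)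
  rcases (show j = 0 ∨ j = 1 by omega) with rfl | rfl <;>
    rcases (show j' = 0 ∨ j' = 1 by omega) with rfl | rfl <;> simp [hJJ, h]

lemma exists_mem_span_qOrthogonal_add (hH : ∀ a b, starRingEnd ℂ (H a b) = H b a)
    (hJJ : ∀ a, J (J a) = -a) (hJinv : ∀ a b, H (J a) (J b) = H b a)
    (hpos : ∀ a, a ≠ 0 → 0 < (H a a).re) {n : ℕ} (y : Fin n → V) (S : Finset (Fin n))
    (hS : (S : Set (Fin n)).Pairwise (QOrthogonal H J on y)) {k : Fin n} (hk : k ∉ S) :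
    ∃ u ∈ Submodule.span ℂ (tupleJ J n y '' {a | ((pairIdx n).symm a).1 ≠ k}),
      ∀ j ∈ S, QOrthogonal H J (y k + u) (y j) := by
  set w : Fin n × Fin 2 → V := fun p => tupleJ J n y (pairIdx n p)
  have hw : ∀ p ∈ S ×ˢ univ, ∀ q ∈ S ×ˢ univ, p ≠ q → H (w p) (w q) = 0 := by
    rintro ⟨s, j⟩ hs ⟨t, j'⟩ ht hpq
    simp only [mem_product, mem_univ, and_true] at hs ht
    rcases eq_or_ne s t with rfl | hst
    · rcases (show j = 0 ∨ j = 1 by omega) with rfl | rfl <;>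
        rcases (show j' = 0 ∨ j' = 1 by omega) with rfl | rfl <;>
        simp_all [w, apply_J_self hJJ hJinv, J_apply_self hJJ hJinv]
    · have h := (hS hs ht hst).apply_eq_zero hH hJinv (hS ht hs hst.symm)
      rcases (show j = 0 ∨ j = 1 by omega) with rfl | rfl <;>
        rcases (show j' = 0 ∨ j' = 1 by omega) with rfl | rfl <;> simp [w, h]
  have hzero : ∀ a, H a a = 0 → a = 0 := fun a h0 =>
    by_contra fun ha => by simpa [h0] using hpos a ha
  refine ⟨-∑ p ∈ S ×ˢ univ, (H (y k) (w p) / H (w p) (w p)) • w p, ?_, fun j hj => ?_⟩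
  · refine neg_mem (sum_mem fun p hp => Submodule.smul_mem _ _ (Submodule.subset_span ?_))
    exact ⟨pairIdx n p, by simpa using ne_of_mem_of_not_mem (mem_product.mp hp).1 hk, rfl⟩
  · have key : ∀ j', H (y k + -∑ p ∈ S ×ˢ univ, (H (y k) (w p) / H (w p) (w p)) • w p)
        (w (j, j')) = 0 := fun j' => by
      rw [← sub_eq_add_neg]
      refine apply_sub_sum_div_smul_eq_zero H _ w _ (by simp [hj])
        (fun t ht htj => hw t ht _ (by simp [hj]) htj) fun h0 => ?_
      rw [hzero _ h0, map_zero]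
    exact ⟨by simpa [w] using key 0, by simpa [w] using key 1⟩

lemma exists_pairwise_qOrthogonal_map_tupleJ_eq (hH : ∀ a b, starRingEnd ℂ (H a b) = H b a)
    (hJJ : ∀ a, J (J a) = -a) (hJinv : ∀ a b, H (J a) (J b) = H b a)
    (hpos : ∀ a, a ≠ 0 → 0 < (H a a).re) {N : Type*} [AddCommGroup N] [Module ℂ N] {n : ℕ}
    (f : V [⋀^Fin (2 * n)]→ₗ[ℂ] N) (y : Fin n → V) :
    ∃ y', Pairwise (QOrthogonal H J on y') ∧ f (tupleJ J n y') = f (tupleJ J n y) := by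
  suffices ∀ S : Finset (Fin n), ∃ y', (S : Set (Fin n)).Pairwise (QOrthogonal H J on y') ∧
      f (tupleJ J n y') = f (tupleJ J n y) by
    simpa [Set.pairwise_univ] using this univ
  intro S
  induction S using Finset.induction_on with
  | empty => exact ⟨y, by simp, rfl⟩
  | insert k S hk ih =>
    obtain ⟨y', hy', hf⟩ := ih
    obtain ⟨u, hu, horth⟩ := exists_mem_span_qOrthogonal_add hH hJJ hJinv hpos y' S hy' hk
    refine ⟨update y' k (y' k + u), ?_, (f.map_tupleJ_update_add J hJJ y' k hu).trans hf⟩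
    have hupd : ∀ j ∈ S, update y' k (y' k + u) j = y' j := fun j hj =>
      update_of_ne (ne_of_mem_of_not_mem hj hk) _ _
    rw [coe_insert, Set.pairwise_insert_of_notMem hk]
    refine ⟨fun i hi j hj hij => ?_, fun j hj => ?_⟩
    · simpa [onFun, hupd i hi, hupd j hj] using hy' hi hj hij
    · simp only [onFun, update_self, hupd j hj]
      exact ⟨horth j hj, (horth j hj).symm hH hJJ hJinv⟩

lemma apply_self_nonneg (hH : ∀ a b, starRingEnd ℂ (H a b) = H b a)
    (hpos : ∀ a, a ≠ 0 → 0 < (H a a).re) (a : V) : 0 ≤ H a a := by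
  rcases eq_or_ne a 0 with rfl | ha
  · simp
  · exact Complex.nonneg_iff.mpr ⟨(hpos a ha).le, (Complex.conj_eq_iff_im.mp (hH a a)).symm⟩

lemma pairingForm_omegaForm_tupleJ_nonneg (hH : ∀ a b, starRingEnd ℂ (H a b) = H b a)
    (hJJ : ∀ a, J (J a) = -a) (hJinv : ∀ a b, H (J a) (J b) = H b a)
    (hpos : ∀ a, a ≠ 0 → 0 < (H a a).re) {n : ℕ} (y : Fin n → V) :
    0 ≤ pairingForm (omegaForm H J) n (tupleJ J n y) := by
  obtain ⟨y', hy', hf⟩ := exists_pairwise_qOrthogonal_map_tupleJ_eq hH hJJ hJinv hpos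
    (pairingForm (omegaForm H J) n) y
  rw [← hf, pairingForm_omegaForm_tupleJ_of_pairwise hH hJJ hJinv y' hy']
  exact mul_nonneg (by positivity) (prod_nonneg fun i _ => apply_self_nonneg hH hpos _)

end QuaternionicHermitian

theorem omega_pow_eval_and_weakly_positive_general
    (V : Type*) [AddCommGroup V] [Module ℂ V]
    (n : ℕ)
    (J : V → V)
    (hJadd : ∀ x y, J (x + y) = J x + J y)
    (hJsmul : ∀ (c : ℂ) x, J (c • x) = (starRingEnd ℂ) c • J x)
    (hJJ : ∀ x, J (J x) = -x)
    -- the quaternionic Hermitian metric, as a Hermitian form on the (1,0)-space: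
    (h : V → V → ℂ)
    (hherm : ∀ x y, (starRingEnd ℂ) (h x y) = h y x)
    (hlin : ∀ (c : ℂ) x x' y, h (c • x + x') y = c * h x y + h x' y)
    (hposdef : ∀ x : V, x ≠ 0 → 0 < (h x x).re)
    (hJinv : ∀ x y, h (J x) (J y) = h y x)
    -- the associated standard (2,0)-form Ω = Σ ξ_i ∧ J(ξ̄_i):
    (Ω : (Fin 2 → V) → ℂ)
    (hΩ : ∀ v : Fin 2 → V, Ω v = -h (v 0) (J (v 1)))
    -- (1,0)-vectors, pairwise orthogonal with respect to the metric:
    (x : Fin n → V)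
    (horth : ∀ i j, i ≠ j → h (x i) (x j) = 0 ∧ h (x i) (J (x j)) = 0) :
    ((n.factorial : ℂ))⁻¹ * powFun V Ω n (tupleJ J n x) = ∏ i, h (x i) (x i)
    ∧ 0 ≤ (∏ i, h (x i) (x i)).re
    -- hence Ω^n is weakly positive:
    ∧ ∀ y : Fin n → V, 0 ≤ (powFun V Ω n (tupleJ J n y)).re
        ∧ (powFun V Ω n (tupleJ J n y)).im = 0 := by
  obtain ⟨J, rfl⟩ : ∃ J' : V →ₗ⋆[ℂ] V, ⇑J' = J := ⟨⟨⟨J, hJadd⟩, hJsmul⟩, rfl⟩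
  obtain ⟨H, rfl⟩ := exists_sesquilinear_eq hherm hlin
  have hpow : ∀ y, powFun V Ω n (tupleJ J n y) =
      ((2 : ℂ) ^ n)⁻¹ * pairingForm (omegaForm H J) n (tupleJ J n y) := fun y =>
    powFun_eq_inv_two_pow_mul_pairingForm _ Ω hΩ n _
  have hprod : 0 ≤ ∏ i, H (x i) (x i) := prod_nonneg fun i _ => apply_self_nonneg hherm hposdef _
  refine ⟨?_, (Complex.nonneg_iff.mp hprod).1, fun y => ?_⟩
  · rw [hpow, pairingForm_omegaForm_tupleJ_of_pairwise hherm hJJ hJinv x horth]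
    field_simp
  · have hy : 0 ≤ powFun V Ω n (tupleJ J n y) := by
      rw [hpow]
      exact mul_nonneg (by positivity)
        (pairingForm_omegaForm_tupleJ_nonneg hherm hJJ hJinv hposdef y)
    exact ⟨(Complex.nonneg_iff.mp hy).1, (Complex.nonneg_iff.mp hy).2.symm⟩

theorem omega_pow_eval_and_weakly_positive
    (V : Type*) [AddCommGroup V] [Module ℂ V] [FiniteDimensional ℂ V]
    (n : ℕ) (hdim : Module.finrank ℂ V = 2 * n)
    (J : V → V)
    (hJadd : ∀ x y, J (x + y) = J x + J y)
    (hJsmul : ∀ (c : ℂ) x, J (c • x) = (starRingEnd ℂ) c • J x)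
    (hJJ : ∀ x, J (J x) = -x)
    -- the quaternionic Hermitian metric, as a Hermitian form on the (1,0)-space:
    (h : V → V → ℂ)
    (hherm : ∀ x y, (starRingEnd ℂ) (h x y) = h y x)
    (hlin : ∀ (c : ℂ) x x' y, h (c • x + x') y = c * h x y + h x' y)
    (hposdef : ∀ x : V, x ≠ 0 → 0 < (h x x).re)
    (hJinv : ∀ x y, h (J x) (J y) = h y x)
    -- the associated standard (2,0)-form Ω = Σ ξ_i ∧ J(ξ̄_i):
    (Ω : (Fin 2 → V) → ℂ)
    (hΩ : ∀ v : Fin 2 → V, Ω v = -h (v 0) (J (v 1)))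
    -- (1,0)-vectors, pairwise orthogonal with respect to the metric:
    (x : Fin n → V)
    (horth : ∀ i j, i ≠ j → h (x i) (x j) = 0 ∧ h (x i) (J (x j)) = 0) :
    ((n.factorial : ℂ))⁻¹ * powFun V Ω n (tupleJ J n x) = ∏ i, h (x i) (x i)
    ∧ 0 ≤ (∏ i, h (x i) (x i)).re
    -- hence Ω^n is weakly positive:
    ∧ ∀ y : Fin n → V, 0 ≤ (powFun V Ω n (tupleJ J n y)).re
        ∧ (powFun V Ω n (tupleJ J n y)).im = 0 :=
  omega_pow_eval_and_weakly_positive_general V n J hJadd hJsmul hJJ h hherm hlin hposdef hJinv Ω hΩ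
    x horth
end
end

section
/- Let η′ be a real (1,1)-form on a quaternionic Hermitian vector space of real dimension 4n satisfying J(η′) = -η′. Then η′ can be diagonalized in an orthonormal (1,0)-coframe ξ_1,...,ξ_{2n} with J(ξ_{2i-1}) = ξ̄_{2i}, J(ξ_{2i}) = -ξ̄_{2i-1}, as η′ = -√-1 Σ α_i ξ_i ∧ ξ̄_i, and its eigenvalues occur in pairs: α_{2i-1} = α_{2i}. -/
/-!
STATEMENT 16.  Let `η'` be a real `(1,1)`-form on a quaternionic Hermitian vector
space of real dimension `4n` (encoded via its `(1,0)`-space `V`, `dim_ℂ V = 2n`, with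
antilinear `J` and invariant Hermitian metric `h`), satisfying `J(η') = -η'` (with
the `J`-action `(Jη)(x, ȳ) = -η(Jy, Jx)` on block-encoded `(1,1)`-forms).

Then `η'` can be diagonalized in an orthonormal frame adapted to `J`: there is an
`h`-orthonormal basis `e₁, …, e_n, Je₁, …, Je_n` of `V` (dually, a coframe
`ξ₁, …, ξ_{2n}` with `J(ξ_{2i-1}) = ξ̄_{2i}`, `J(ξ_{2i}) = -ξ̄_{2i-1}`) in which
`η' = -√-1 Σ α_i ξ_i ∧ ξ̄_i`, and the eigenvalues occur in pairs: the eigenvalue on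
`e_i` equals the eigenvalue on `J e_i`.
-/

noncomputable section

/-- The action of `J` on (block-encoded) `(1,1)`-forms. -/
def Jact {V : Type*} (J : V → V) (η : V → V → ℂ) : V → V → ℂ :=
  fun x y => -η (J y) (J x)

/-!
Since `η'` is real, `√-1 η'` is a Hermitian form, represented through `h` by an `h`-self-adjoint
operator `T`, and `J(η') = -η'` says exactly that `T` commutes with the antilinear map `J`.
For a unit eigenvector `e` of `T` with (real) eigenvalue `α`, `J e` is a unit eigenvector with
the same eigenvalue, orthogonal to `e` because `J² = -1` and `J` is antiunitary.
The quaternionic line `span {e, J e}` is `J`- and `T`-invariant, hence so is its orthogonal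
complement, and induction on the dimension produces the frame.
-/

open Module Submodule
open scoped InnerProductSpace ComplexConjugate

section Forms

variable {𝕜 W : Type*} [RCLike 𝕜] [AddCommGroup W] [Module 𝕜 W]

def LinearMap.ofSMulAdd {R S M N : Type*} [Semiring R] [Semiring S] [AddCommMonoid M]
    [AddCommGroup N] [Module R M] [Module S N] (σ : R →+* S) (f : M → N)
    (hf : ∀ (c : R) x x', f (c • x + x') = σ c • f x + f x') : M →ₛₗ[σ] N where
  toFun := f
  map_add' x x' := by simpa using hf 1 x x'
  map_smul' c x := by simpa [show f 0 = 0 by simpa using hf 1 0 0] using hf c x 0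

/-- Mathlib's sesquilinear forms are conjugate-linear in the first argument, so the arguments
of `f` are swapped. -/
def LinearMap.sesqFormOfSMulAdd (f : W → W → 𝕜)
    (h₁ : ∀ (c : 𝕜) x x' y, f (c • x + x') y = c * f x y + f x' y)
    (h₂ : ∀ (c : 𝕜) y y' x, f x (c • y + y') = conj c * f x y + f x y') :
    W →ₗ⋆[𝕜] W →ₗ[𝕜] 𝕜 :=
  ofSMulAdd (starRingEnd 𝕜) (fun y => ofSMulAdd (RingHom.id 𝕜) (f · y) fun c x x' => h₁ c x x' y)
    fun c y y' => LinearMap.ext fun x => h₂ c y y' x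

@[simp]
theorem LinearMap.sesqFormOfSMulAdd_apply (f : W → W → 𝕜) (h₁ h₂) (x y : W) :
    sesqFormOfSMulAdd f h₁ h₂ x y = f y x :=
  rfl

theorem smul_add_right_of_conj_symm {f : W → W → 𝕜} (hf : ∀ x y, conj (f x y) = f y x)
    (h₁ : ∀ (c : 𝕜) x x' y, f (c • x + x') y = c * f x y + f x' y) (c : 𝕜) (y y' x : W) :
    f x (c • y + y') = conj c * f x y + f x y' := by
  rw [← hf, h₁, map_add, map_mul, hf, hf]

abbrev InnerProductSpace.Core.ofIsSymm (B : W →ₗ⋆[𝕜] W →ₗ[𝕜] 𝕜) (hB : B.IsSymm)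
    (hpos : ∀ x, x ≠ 0 → 0 < RCLike.re (B x x)) : InnerProductSpace.Core 𝕜 W where
  inner x y := B x y
  conj_inner_symm x y := LinearMap.isSymm_def.mp hB y x
  re_inner_nonneg x := by
    rcases eq_or_ne x 0 with rfl | hx
    · simp
    · exact (hpos x hx).le
  add_left := LinearMap.map_add₂ B
  smul_left x y r := B.map_smulₛₗ₂ r x y
  definite x hx := by
    by_contra h
    exact (hpos x h).ne' (by rw [hx, map_zero])

end Forms

namespace LinearMap

variable {𝕜 V : Type*} [RCLike 𝕜] [NormedAddCommGroup V] [InnerProductSpace 𝕜 V]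
  {J : V →ₗ⋆[𝕜] V} {T : V →ₗ[𝕜] V}

theorem inner_self_apply_eq_zero (hJJ : ∀ x, J (J x) = -x)
    (hJ : ∀ x y, ⟪J x, J y⟫_𝕜 = ⟪y, x⟫_𝕜) (x : V) : ⟪x, J x⟫_𝕜 = 0 := by
  have h := hJ x (J x)
  rw [hJJ, inner_neg_right, neg_eq_iff_add_eq_zero, ← two_mul, mul_eq_zero] at h
  exact inner_eq_zero_symm.mp (h.resolve_left two_ne_zero)

theorem mapsTo_orthogonal (hJJ : ∀ x, J (J x) = -x)
    (hJ : ∀ x y, ⟪J x, J y⟫_𝕜 = ⟪y, x⟫_𝕜) {K : Submodule 𝕜 V} (hK : ∀ x ∈ K, J x ∈ K) :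
    ∀ x ∈ Kᗮ, J x ∈ Kᗮ := by
  intro x hx k hk
  have hk' : k = J (-J k) := by rw [map_neg, hJJ, neg_neg]
  rw [hk', hJ]
  exact inner_eq_zero_symm.mp (hx _ (K.neg_mem (hK k hk)))

theorem orthonormal_sumElim_comp {ι : Type*} (hJ : ∀ x y, ⟪J x, J y⟫_𝕜 = ⟪y, x⟫_𝕜)
    {e : ι → V} (he : Orthonormal 𝕜 e) (hcross : ∀ i j, ⟪e i, J (e j)⟫_𝕜 = 0) :
    Orthonormal 𝕜 (Sum.elim e (J ∘ e)) := by
  classical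
  rw [orthonormal_iff_ite] at he ⊢
  rintro (i | i) (j | j)
  · simpa using he i j
  · simpa using hcross i j
  · simpa using inner_eq_zero_symm.mp (hcross j i)
  · simpa [hJ, eq_comm] using he j i

/-- When `J` is the action of the quaternion `j`, this is the quaternionic line `x ℍ`. -/
def quaternionicLine (J : V →ₗ⋆[𝕜] V) (x : V) : Submodule 𝕜 V :=
  span 𝕜 (Set.range ![x, J x])

theorem finrank_quaternionicLine (hJJ : ∀ x, J (J x) = -x)
    (hJ : ∀ x y, ⟪J x, J y⟫_𝕜 = ⟪y, x⟫_𝕜) {x : V} (hx : ‖x‖ = 1) :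
    finrank 𝕜 (quaternionicLine J x) = 2 := by
  have hJx : ‖J x‖ = 1 := by
    rw [← hx, @norm_eq_sqrt_re_inner 𝕜, @norm_eq_sqrt_re_inner 𝕜, hJ]
  have hon : Orthonormal 𝕜 ![x, J x] := by
    simp [orthonormal_vecCons_iff, hx, hJx, inner_self_apply_eq_zero hJJ hJ]
  rw [quaternionicLine, finrank_span_eq_card hon.linearIndependent, Fintype.card_fin]

theorem self_mem_quaternionicLine (x : V) : x ∈ quaternionicLine J x :=
  subset_span ⟨0, rfl⟩

theorem apply_mem_quaternionicLine (x : V) : J x ∈ quaternionicLine J x :=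
  subset_span ⟨1, rfl⟩

theorem quaternionicLine_le {x : V} {W : Submodule 𝕜 V} (hx : x ∈ W) (hJx : J x ∈ W) :
    quaternionicLine J x ≤ W := by
  rw [quaternionicLine, span_le, Set.range_subset_iff, Fin.forall_fin_two]
  exact ⟨hx, hJx⟩

theorem mapsTo_quaternionicLine {σ : 𝕜 →+* 𝕜} {f : V →ₛₗ[σ] V} {x : V}
    (hx : f x ∈ quaternionicLine J x) (hJx : f (J x) ∈ quaternionicLine J x) :
    ∀ y ∈ quaternionicLine J x, f y ∈ quaternionicLine J x := fun _ hy =>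
  quaternionicLine_le (W := (quaternionicLine J x).comap f) hx hJx hy

theorem IsSymmetric.exists_unit_eigenvector_mem {T : V →ₗ[𝕜] V} (hT : T.IsSymmetric)
    {W : Submodule 𝕜 V} [FiniteDimensional 𝕜 W] [Nontrivial W] (hTW : ∀ x ∈ W, T x ∈ W) :
    ∃ x ∈ W, ‖x‖ = 1 ∧ ∃ μ : ℝ, T x = (μ : 𝕜) • x := by
  obtain ⟨μ, hμ⟩ : ∃ μ : ℝ, Module.End.HasEigenvalue (T.restrict hTW) μ :=
    ⟨_, (hT.restrict_invariant hTW).hasEigenvalue_iSup_of_finiteDimensional⟩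
  obtain ⟨v, hv⟩ := hμ.exists_hasEigenvector
  have hv0 : (v : V) ≠ 0 := by simpa using hv.2
  have hTv := congrArg Subtype.val hv.apply_eq_smul
  refine ⟨(‖(v : V)‖⁻¹ : 𝕜) • v, W.smul_mem _ v.2, norm_smul_inv_norm hv0, μ, ?_⟩
  rw [map_smul, smul_comm]
  exact congrArg _ hTv

theorem exists_orthonormal_eigenframe_of_mapsTo [FiniteDimensional 𝕜 V]
    (hJJ : ∀ x, J (J x) = -x) (hJ : ∀ x y, ⟪J x, J y⟫_𝕜 = ⟪y, x⟫_𝕜) (hT : T.IsSymmetric)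
    (hTJ : ∀ x, T (J x) = J (T x)) (m : ℕ) {W : Submodule 𝕜 V} (hJW : ∀ x ∈ W, J x ∈ W)
    (hTW : ∀ x ∈ W, T x ∈ W) (hW : finrank 𝕜 W = 2 * m) :
    ∃ (e : Fin m → V) (α : Fin m → ℝ), (∀ i, e i ∈ W) ∧ Orthonormal 𝕜 e ∧
      (∀ i j, ⟪e i, J (e j)⟫_𝕜 = 0) ∧ ∀ i, T (e i) = (α i : 𝕜) • e i := by
  induction m generalizing W with
  | zero => exact ⟨Fin.elim0, Fin.elim0, Fin.rec0, .of_isEmpty _, Fin.rec0, Fin.rec0⟩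
  | succ m ih =>
    have : Nontrivial W := Module.finrank_pos_iff (R := 𝕜) |>.mp (by omega)
    obtain ⟨x, hxW, hx, μ, hTx⟩ := hT.exists_unit_eigenvector_mem hTW
    set L := quaternionicLine J x
    have hTJx : T (J x) = (μ : 𝕜) • J x := by
      rw [hTJ, hTx, map_smulₛₗ, RCLike.conj_ofReal]
    have hJL : ∀ y ∈ L, J y ∈ L := mapsTo_quaternionicLine (apply_mem_quaternionicLine x)
      (by rw [hJJ]; exact L.neg_mem (self_mem_quaternionicLine x))
    have hTL : ∀ y ∈ L, T y ∈ L := mapsTo_quaternionicLine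
      (by rw [hTx]; exact L.smul_mem _ (self_mem_quaternionicLine x))
      (by rw [hTJx]; exact L.smul_mem _ (apply_mem_quaternionicLine x))
    have hLW : L ≤ W := quaternionicLine_le hxW (hJW x hxW)
    have hW' : finrank 𝕜 ↥(Lᗮ ⊓ W) = 2 * m :=
      finrank_add_inf_finrank_orthogonal' hLW (by rw [finrank_quaternionicLine hJJ hJ hx, hW]; ring)
    obtain ⟨e, α, heW, he, hcross, hTe⟩ := ih (W := Lᗮ ⊓ W)
      (fun y hy => ⟨mapsTo_orthogonal hJJ hJ hJL y hy.1, hJW y hy.2⟩)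
      (fun y hy => ⟨hT.orthogonalComplement_mem_invtSubmodule hTL hy.1, hTW y hy.2⟩) hW'
    have hxe : ∀ i, ⟪x, e i⟫_𝕜 = 0 := fun i => (heW i).1 x (self_mem_quaternionicLine x)
    refine ⟨Fin.cons x e, Fin.cons μ α, Fin.cases hxW fun i => (heW i).2,
      orthonormal_vecCons_iff.mpr ⟨hx, hxe, he⟩, ?_, Fin.cases hTx hTe⟩
    refine Fin.cases (Fin.cases ?_ fun j => ?_) fun i => Fin.cases ?_ fun j => ?_
    · exact inner_self_apply_eq_zero hJJ hJ x
    · exact (mapsTo_orthogonal hJJ hJ hJL _ (heW j).1) x (self_mem_quaternionicLine x)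
    · exact inner_eq_zero_symm.mp ((heW i).1 _ (apply_mem_quaternionicLine x))
    · exact hcross i j

theorem exists_orthonormal_eigenbasis [FiniteDimensional 𝕜 V]
    (hJJ : ∀ x, J (J x) = -x) (hJ : ∀ x y, ⟪J x, J y⟫_𝕜 = ⟪y, x⟫_𝕜) (hT : T.IsSymmetric)
    (hTJ : ∀ x, T (J x) = J (T x)) {n : ℕ} (hn : finrank 𝕜 V = 2 * n) :
    ∃ (e : Fin n → V) (b : Module.Basis (Fin n ⊕ Fin n) 𝕜 V) (α : Fin n → ℝ),
      ⇑b = Sum.elim e (J ∘ e) ∧ Orthonormal 𝕜 b ∧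
      ∀ a, T (b a) = ((Sum.elim α α a : ℝ) : 𝕜) • b a := by
  obtain ⟨e, α, -, he, hcross, hTe⟩ := exists_orthonormal_eigenframe_of_mapsTo hJJ hJ hT hTJ n
    (W := ⊤) (fun _ _ => mem_top) (fun _ _ => mem_top) (by rw [finrank_top, hn])
  have hon := orthonormal_sumElim_comp hJ he hcross
  refine ⟨e, basisOfLinearIndependentOfCardEqFinrank' _ hon.linearIndependent
    (by simp [hn]; ring), α, coe_basisOfLinearIndependentOfCardEqFinrank' .., by simpa using hon,
    ?_⟩
  rintro (i | i)
  · simpa using hTe i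
  · simp [hTJ, hTe, map_smulₛₗ]

theorem IsSymmetric.commute_of_inner_map_map (hJJ : ∀ x, J (J x) = -x)
    (hJ : ∀ x y, ⟪J x, J y⟫_𝕜 = ⟪y, x⟫_𝕜) (hT : T.IsSymmetric)
    (hTJ : ∀ x y, ⟪T (J x), J y⟫_𝕜 = ⟪T y, x⟫_𝕜) (x : V) : T (J x) = J (T x) := by
  refine ext_inner_right 𝕜 fun y => ?_
  obtain ⟨z, rfl⟩ : ∃ z, J z = y := ⟨-J y, by rw [map_neg, hJJ, neg_neg]⟩
  rw [hTJ, hJ, hT]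

theorem _root_.Orthonormal.inner_apply_eq_ite {ι : Type*} [DecidableEq ι] {v : ι → V}
    (hv : Orthonormal 𝕜 v) {μ : ι → ℝ} (hT : ∀ i, T (v i) = (μ i : 𝕜) • v i) (i j : ι) :
    ⟪T (v j), v i⟫_𝕜 = if i = j then (μ i : 𝕜) else 0 := by
  rw [hT, inner_smul_left, RCLike.conj_ofReal, orthonormal_iff_ite.mp hv]
  rcases eq_or_ne i j with rfl | hne
  · simp
  · simp [hne, hne.symm]

theorem IsSymm.exists_isSymmetric_inner_eq [FiniteDimensional 𝕜 V]
    {B : V →ₗ⋆[𝕜] V →ₗ[𝕜] 𝕜} (hB : B.IsSymm) :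
    ∃ T : V →ₗ[𝕜] V, T.IsSymmetric ∧ ∀ x y, ⟪T x, y⟫_𝕜 = B x y := by
  have := FiniteDimensional.complete 𝕜 V
  let T : V →ₗ[𝕜] V := (InnerProductSpace.toDual 𝕜 V).symm.toLinearEquiv.toLinearMap ∘ₛₗ
    (LinearMap.toContinuousLinearMap.toLinearMap ∘ₛₗ B)
  have hTB : ∀ x y, ⟪T x, y⟫_𝕜 = B x y := fun x y => InnerProductSpace.toDual_symm_apply
  refine ⟨T, fun x y => ?_, hTB⟩
  rw [hTB, ← inner_conj_symm, hTB, isSymm_def.mp hB]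

end LinearMap

theorem anti_J_invariant_diagonalization
    (V : Type*) [AddCommGroup V] [Module ℂ V] [FiniteDimensional ℂ V]
    (n : ℕ) (hdim : Module.finrank ℂ V = 2 * n)
    (J : V → V)
    (hJadd : ∀ x y, J (x + y) = J x + J y)
    (hJsmul : ∀ (c : ℂ) x, J (c • x) = (starRingEnd ℂ) c • J x)
    (hJJ : ∀ x, J (J x) = -x)
    (h : V → V → ℂ)
    (hherm : ∀ x y, (starRingEnd ℂ) (h x y) = h y x)
    (hlin : ∀ (c : ℂ) x x' y, h (c • x + x') y = c * h x y + h x' y)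
    (hposdef : ∀ x : V, x ≠ 0 → 0 < (h x x).re)
    (hJinv : ∀ x y, h (J x) (J y) = h y x)
    (η' : V → V → ℂ)
    (hη1 : ∀ (c : ℂ) x x' y, η' (c • x + x') y = c * η' x y + η' x' y)
    (hη2 : ∀ (c : ℂ) y y' x, η' x (c • y + y') = (starRingEnd ℂ) c * η' x y + η' x y')
    (hreal : ∀ x y, (starRingEnd ℂ) (η' x y) = -η' y x)
    -- J(η') = -η':
    (hanti : ∀ x y, Jact J η' x y = -η' x y) :
    ∃ (e : Fin n → V) (b : Module.Basis (Fin n ⊕ Fin n) ℂ V) (α : Fin n → ℝ),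
      (∀ i, b (Sum.inl i) = e i) ∧ (∀ i, b (Sum.inr i) = J (e i)) ∧
      -- the frame e₁, …, e_n, Je₁, …, Je_n is h-orthonormal:
      (∀ a a' : Fin n ⊕ Fin n, h (b a) (b a') = if a = a' then 1 else 0) ∧
      -- η' is diagonal in this frame, with eigenvalues occurring in pairs
      -- (α on e_i and again α on J e_i):
      (∀ a a' : Fin n ⊕ Fin n, η' (b a) (b a')
        = if a = a' then
            -Complex.I * (α (Sum.elim id id a) : ℂ)
          else 0) := by
  let core := InnerProductSpace.Core.ofIsSymm
    (LinearMap.sesqFormOfSMulAdd h hlin (smul_add_right_of_conj_symm hherm hlin))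
    ⟨fun x y => hherm y x⟩ hposdef
  let : NormedAddCommGroup V := core.toNormedAddCommGroup
  let : InnerProductSpace ℂ V := .ofCore core.toCore
  have hinner : ∀ x y, ⟪x, y⟫_ℂ = h y x := fun _ _ => rfl
  let Jₗ : V →ₗ⋆[ℂ] V := ⟨⟨J, hJadd⟩, hJsmul⟩
  have hJ : ∀ x y, ⟪Jₗ x, Jₗ y⟫_ℂ = ⟪y, x⟫_ℂ := fun x y => hJinv y x
  have hB : (Complex.I • LinearMap.sesqFormOfSMulAdd η' hη1 hη2).IsSymm := ⟨fun x y => by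
    simp [hreal]⟩
  obtain ⟨T, hT, hTη⟩ := hB.exists_isSymmetric_inner_eq
  simp only [LinearMap.smul_apply, LinearMap.sesqFormOfSMulAdd_apply, smul_eq_mul] at hTη
  have hTJ := hT.commute_of_inner_map_map (J := Jₗ) hJJ hJ fun x y => by
    simp [hTη, Jₗ, neg_inj.mp (hanti x y)]
  obtain ⟨e, b, α, hb, hon, hTb⟩ := LinearMap.exists_orthonormal_eigenbasis hJJ hJ hT hTJ hdim
  refine ⟨e, b, α, fun i => by simp [hb], fun i => by simp [hb, Jₗ], fun a a' => ?_, fun a a' => ?_⟩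
  · rw [← hinner, orthonormal_iff_ite.mp hon]
    exact if_congr eq_comm rfl rfl
  · have hη : η' (b a) (b a') = -Complex.I * ⟪T (b a'), b a⟫_ℂ := by
      rw [hTη]
      linear_combination η' (b a) (b a') * Complex.I_sq
    rw [hη, hon.inner_apply_eq_ite hTb]
    split_ifs
    · cases a <;> rfl
    · exact mul_zero _

end
end

section
/- On a flat quaternionic vector space of real dimension 4n with holomorphic symplectic form Ω (with respect to I), the kernel of Q* restricted to the (n,n)-part of the algebra generated by ω_I, ω_J, ω_K is one-dimensional and spanned by Ξ := ω_I^n - ω_I^{n-2} ∧ (Ω ∧ Ω̄) + ω_I^{n-4} ∧ (Ω ∧ Ω̄)² - ..., where Q* is the adjoint of the operator Q(η) = η ∧ (ω_I² + ω_J² + ω_K²), using Q*(ω_I^i ∧ (Ω∧Ω̄)^j) = ω_I^{i-2} ∧ (Ω∧Ω̄)^j + ω_I^i ∧ (Ω∧Ω̄)^{j-2}. -/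
/-!
STATEMENT 19.  On the flat quaternionic vector space `ℍⁿ` with its standard
hyperkähler structure, let `A*` be the subalgebra of forms generated by
`ω_I, ω_J, ω_K`; up to the middle degree it is a free symmetric algebra on these
generators, and its `(p,p)`-part (with respect to `I`) has basis
`ω_I^i ∧ (Ω ∧ Ω̄)^j`, `i + 2j = p`, where `Ω = ω_J + √-1 ω_K`.  We model the
`(p,p)`-parts by coefficient functions on the basis, identifying
`ω_I^i ∧ (Ω ∧ Ω̄)^j` with the delta function at `(i,j)`.  The metric adjoint `Q*` of
`Q(η) = η ∧ (ω_I² + ω_J² + ω_K²) = η ∧ (ω_I² + Ω ∧ Ω̄)` acts by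
`Q*(ω_I^i ∧ (Ω∧Ω̄)^j) = ω_I^{i-2} ∧ (Ω∧Ω̄)^j + ω_I^i ∧ (Ω∧Ω̄)^{j-1}`, i.e. on
coefficient functions `(Q* f)(i,j) = f(i+2, j) + f(i, j+1)`.

Claim: the kernel of `Q*` restricted to the `(n,n)`-part is one-dimensional, spanned
by `Ξ = ω_I^n - ω_I^{n-2} ∧ (Ω∧Ω̄) + ω_I^{n-4} ∧ (Ω∧Ω̄)² - …`.
-/

noncomputable section

/-- Elements of the algebra `A*` generated by `ω_I, ω_J, ω_K`, written in the basis
`ω_I^i ∧ (Ω∧Ω̄)^j` and encoded by their coefficient functions. -/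
abbrev ACoeff := (ℕ × ℕ) → ℂ

/-- The basis element `ω_I^i ∧ (Ω ∧ Ω̄)^j`. -/
def basisElt (i j : ℕ) : ACoeff := fun kl => if kl = (i, j) then 1 else 0

/-- The adjoint `Q*` of `Q(η) = η ∧ (ω_I² + ω_J² + ω_K²)`, acting on coefficient
functions via `Q*(ω_I^i ∧ (Ω∧Ω̄)^j) = ω_I^{i-2} ∧ (Ω∧Ω̄)^j + ω_I^i ∧ (Ω∧Ω̄)^{j-1}`. -/
def Qstar : ACoeff →ₗ[ℂ] ACoeff where
  toFun f := fun kl => f (kl.1 + 2, kl.2) + f (kl.1, kl.2 + 1)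
  map_add' f g := by funext kl; simp [Pi.add_apply]; ring
  map_smul' c f := by funext kl; simp [Pi.smul_apply, smul_eq_mul]; ring

/-- The `(n,n)`-part `A^{n,n}` of the algebra: the span of the basis elements
`ω_I^i ∧ (Ω∧Ω̄)^j` with `i + 2j = n`. -/
def Ann (n : ℕ) : Submodule ℂ ACoeff :=
  Submodule.span ℂ {g | ∃ i j : ℕ, i + 2 * j = n ∧ g = basisElt i j}

/-- `Ξ = ω_I^n - ω_I^{n-2} ∧ (Ω∧Ω̄) + ω_I^{n-4} ∧ (Ω∧Ω̄)² - …`. -/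
def Xi (n : ℕ) : ACoeff :=
  fun kl => if kl.1 + 2 * kl.2 = n then ((-1 : ℂ)) ^ kl.2 else 0

/-!
On coefficient functions, `Q* f = 0` says `f (i, j + 1) = -f (i + 2, j)`, so
`f (i, j) = (-1)^j f (i + 2j, 0)`. Since the line `i + 2j = n` is finite, `A^{n,n}` is exactly the
space of functions supported on it, and on that line a kernel element is therefore determined by
its coefficient at `ω_I^n`, with alternating signs: it is that coefficient times `Ξ`.
-/

lemma basisElt_eq_single (i j : ℕ) : basisElt i j = Pi.single (i, j) 1 := by
  funext kl
  simp [basisElt, Pi.single_apply]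

def lineSupported (n : ℕ) : Submodule ℂ ACoeff where
  carrier := {f | ∀ p : ℕ × ℕ, p.1 + 2 * p.2 ≠ n → f p = 0}
  add_mem' hf hg p hp := by simp [hf p hp, hg p hp]
  zero_mem' _ _ := rfl
  smul_mem' c f hf p hp := by simp [hf p hp]

def lineFinset (n : ℕ) : Finset (ℕ × ℕ) :=
  (Finset.range (n + 1) ×ˢ Finset.range (n + 1)).filter fun p => p.1 + 2 * p.2 = n

lemma mem_lineFinset {n : ℕ} {p : ℕ × ℕ} : p ∈ lineFinset n ↔ p.1 + 2 * p.2 = n := by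
  simp only [lineFinset, Finset.mem_filter, Finset.mem_product, Finset.mem_range]
  omega

lemma eq_sum_basisElt_of_mem_lineSupported {n : ℕ} {f : ACoeff} (hf : f ∈ lineSupported n) :
    f = ∑ p ∈ lineFinset n, f p • basisElt p.1 p.2 := by
  funext kl
  simp only [basisElt_eq_single, Prod.mk.eta, Finset.sum_apply, Pi.smul_apply,
    Pi.single_apply, smul_eq_mul, mul_ite, mul_one, mul_zero, Finset.sum_ite_eq]
  split_ifs with hkl
  · rfl
  · exact hf kl (mt mem_lineFinset.2 hkl)

lemma Ann_eq_lineSupported (n : ℕ) : Ann n = lineSupported n := by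
  apply le_antisymm
  · rw [Ann, Submodule.span_le]
    rintro _ ⟨i, j, hij, rfl⟩ p hp
    simp only [basisElt]
    exact if_neg fun h => hp (by subst h; exact hij)
  · intro f hf
    rw [eq_sum_basisElt_of_mem_lineSupported hf]
    refine Submodule.sum_mem _ fun p hp => Submodule.smul_mem _ _ (Submodule.subset_span ?_)
    exact ⟨p.1, p.2, mem_lineFinset.1 hp, rfl⟩

lemma Xi_mem_lineSupported (n : ℕ) : Xi n ∈ lineSupported n :=
  fun _ hp => if_neg hp

lemma Qstar_eq_zero_iff {f : ACoeff} : Qstar f = 0 ↔ ∀ i j, f (i, j + 1) = -f (i + 2, j) := by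
  simp only [funext_iff, Prod.forall, Qstar, LinearMap.coe_mk, AddHom.coe_mk, Pi.zero_apply]
  refine forall₂_congr fun i j => ?_
  constructor <;> intro h <;> linear_combination h

lemma Qstar_Xi (n : ℕ) : Qstar (Xi n) = 0 := by
  refine Qstar_eq_zero_iff.2 fun i j => ?_
  have hcond : i + 2 * (j + 1) = n ↔ i + 2 + 2 * j = n := by omega
  simp only [Xi, hcond]
  split_ifs <;> ring

lemma apply_eq_neg_one_pow_mul_of_Qstar_eq_zero {f : ACoeff} (hf : Qstar f = 0) (i j : ℕ) :
    f (i, j) = (-1) ^ j * f (i + 2 * j, 0) := by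
  induction j generalizing i with
  | zero => simp
  | succ j ih =>
    rw [Qstar_eq_zero_iff.1 hf, ih, show i + 2 + 2 * j = i + 2 * (j + 1) by ring, pow_succ]
    ring

lemma eq_smul_Xi_of_mem_lineSupported {n : ℕ} {f : ACoeff} (hline : f ∈ lineSupported n)
    (hker : Qstar f = 0) : f = f (n, 0) • Xi n := by
  funext p
  simp only [Pi.smul_apply, Xi, smul_eq_mul]
  split_ifs with hp
  · rw [apply_eq_neg_one_pow_mul_of_Qstar_eq_zero hker, hp, mul_comm]
  · rw [mul_zero]
    exact hline p hp

/-- The kernel of `Q*` restricted to `A^{n,n}` is one-dimensional, spanned by `Ξ`. -/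
theorem ker_Qstar_on_Ann (n : ℕ) :
    Ann n ⊓ LinearMap.ker Qstar = Submodule.span ℂ {Xi n} := by
  rw [Ann_eq_lineSupported]
  apply le_antisymm
  · rintro f ⟨hline, hker⟩
    exact Submodule.mem_span_singleton.2
      ⟨f (n, 0), (eq_smul_Xi_of_mem_lineSupported hline hker).symm⟩
  · rw [Submodule.span_le, Set.singleton_subset_iff]
    exact ⟨Xi_mem_lineSupported n, Qstar_Xi n⟩

end
end
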